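/- In a Hamming graph G = ∏_{i=1}^t K_{n_i} with constant threshold 2: if x and y are vertices at Hamming distance 2, differing exactly in coordinates i and j (i ≠ j), and A, B ⊆ {1,…,t}, then the activation closure of x_A ∪ y_B equals x_{(A ∩ B) \ {i,j}}. -/

import Mathlib

/-!
Subcubes are activation-closed for threshold 2: a vertex outside `x_C` has at most one
neighbour in it, namely the vertex that repairs one coordinate of `C`. This gives
`[x_A ∪ y_B]_2 ⊆ x_{(A ∩ B) \ {i,j}}`.

Conversely, a 2-closed set `S` containing `x` and every neighbour `update x k a` with `k ∉ C`
contains `x_C`: by induction on the distance to `x`, a vertex of `x_C` differing from `x` in two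
coordinates has two distinct neighbours in `x_C` closer to `x`. Two vertices on a line activate
the whole line, and the two midpoints of `x` and `y` are adjacent to both. So `x_A` grows to
`x_{A \ {i,j}}`, symmetrically `y_B` grows to `y_{B \ {i,j}} = x_{B \ {i,j}}`, and two subcubes
through `x` activate the subcube of the intersection.
-/

/-- The Hamming graph `∏ K_{n i}`: vertices are tuples, adjacent iff they differ
in exactly one coordinate (Hamming distance 1). -/
def hammingGraph {t : ℕ} (n : Fin t → ℕ) : SimpleGraph (Π i, Fin (n i)) where
  Adj x y := hammingDist x y = 1
  symm := ⟨fun x y h => by try simp only at h ⊢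
                           rwa [hammingDist_comm]⟩
  loopless := ⟨fun x h => by simp [hammingDist_self] at h⟩

/-- The "subcube" `x_A`: all vertices agreeing with `x` on every coordinate in `A`. -/
def subcube {t : ℕ} {n : Fin t → ℕ} (x : Π i, Fin (n i)) (A : Set (Fin t)) :
    Set (Π i, Fin (n i)) :=
  {z | ∀ i ∈ A, z i = x i}

/-- A set `A` is closed under activation: every vertex with at least `θ v`
neighbors in `A` already belongs to `A`. -/
def activationClosed {V : Type*} [Fintype V] (G : SimpleGraph V) (θ : V → ℤ)
    (A : Set V) : Prop :=
  ∀ v : V, θ v ≤ ((A ∩ G.neighborSet v).ncard : ℤ) → v ∈ A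

/-- The activation closure `[S]_θ`: the smallest activation-closed superset of `S`. -/
def activationClosure {V : Type*} [Fintype V] (G : SimpleGraph V) (θ : V → ℤ)
    (S : Set V) : Set V :=
  ⋂₀ {A : Set V | S ⊆ A ∧ activationClosed G θ A}

theorem activationClosed_two_iff {V : Type*} [Fintype V] {G : SimpleGraph V} {S : Set V} :
    activationClosed G (fun _ => 2) S ↔
      ∀ ⦃v w₁ w₂⦄, w₁ ∈ S → w₂ ∈ S → w₁ ≠ w₂ → G.Adj v w₁ → G.Adj v w₂ → v ∈ S := by
  have two_le_iff (v : V) : (2 : ℤ) ≤ (S ∩ G.neighborSet v).ncard ↔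
      ∃ w₁ w₂, w₁ ∈ S ∩ G.neighborSet v ∧ w₂ ∈ S ∩ G.neighborSet v ∧ w₁ ≠ w₂ := by
    rw [← Set.one_lt_ncard_iff (Set.toFinite _)]; omega
  simp only [activationClosed, two_le_iff]
  exact ⟨fun h v w₁ w₂ h₁ h₂ hne a₁ a₂ => h v ⟨w₁, w₂, ⟨h₁, a₁⟩, ⟨h₂, a₂⟩, hne⟩,
    fun h v ⟨w₁, w₂, ⟨h₁, a₁⟩, ⟨h₂, a₂⟩, hne⟩ => h h₁ h₂ hne a₁ a₂⟩

variable {t : ℕ} {n : Fin t → ℕ}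

open Function

theorem hammingGraph_adj_of_ne_of_eq {u v : Π i, Fin (n i)} {k : Fin t} (hk : u k ≠ v k)
    (h : ∀ l, l ≠ k → u l = v l) : (hammingGraph n).Adj u v := by
  refine Finset.card_eq_one.mpr ⟨k, Finset.ext fun l => ?_⟩
  by_cases hl : l = k
  · simp [hl, hk]
  · simp [hl, h l hl]

theorem hammingGraph_adj_update {u : Π i, Fin (n i)} {k : Fin t} {a : Fin (n k)}
    (ha : a ≠ u k) :
    (hammingGraph n).Adj u (update u k a) :=
  hammingGraph_adj_of_ne_of_eq (k := k) (by simpa using ha.symm) fun l hl => by simp [hl]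

theorem exists_eq_update_of_hammingGraph_adj {v w : Π i, Fin (n i)}
    (h : (hammingGraph n).Adj v w) :
    ∃ k, w = update v k (w k) := by
  obtain ⟨k, hk⟩ := Finset.card_eq_one.mp h
  refine ⟨k, funext fun l => ?_⟩
  by_cases hl : l = k
  · subst hl; simp
  · have : l ∉ ({k} : Finset (Fin t)) := by simpa using hl
    rw [← hk] at this
    rw [update_of_ne hl]
    exact (by simpa using this : v l = w l).symm

theorem self_mem_subcube (x : Π i, Fin (n i)) (C : Set (Fin t)) : x ∈ subcube x C :=
  fun _ _ => rfl

theorem update_mem_subcube (x : Π i, Fin (n i)) {C : Set (Fin t)} {k : Fin t} (hk : k ∉ C)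
    (a : Fin (n k)) : update x k a ∈ subcube x C :=
  fun _ hl => update_of_ne (ne_of_mem_of_not_mem hl hk) _ _

theorem subcube_mono (x : Π i, Fin (n i)) {C D : Set (Fin t)} (h : C ⊆ D) :
    subcube x D ⊆ subcube x C :=
  fun _ hz k hk => hz k (h hk)

theorem subcube_congr {x y : Π i, Fin (n i)} {C : Set (Fin t)} (h : ∀ k ∈ C, x k = y k) :
    subcube x C = subcube y C :=
  Set.ext fun z => forall₂_congr fun k hk => by rw [h k hk]

theorem activationClosed_subcube (x : Π i, Fin (n i)) (C : Set (Fin t)) :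
    activationClosed (hammingGraph n) (fun _ => 2) (subcube x C) := by
  refine activationClosed_two_iff.mpr fun v w₁ w₂ h₁ h₂ hne a₁ a₂ => ?_
  by_contra hv
  obtain ⟨k, hkC, hk⟩ : ∃ k ∈ C, v k ≠ x k := by simpa [subcube] using hv
  have unique : ∀ w ∈ subcube x C, (hammingGraph n).Adj v w → w = update v k (x k) := by
    intro w hw hvw
    obtain ⟨l, hl⟩ := exists_eq_update_of_hammingGraph_adj hvw
    obtain rfl : l = k := by
      by_contra hlk
      have hwk := hw k hkC
      rw [hl, update_of_ne (Ne.symm hlk)] at hwk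
      exact hk hwk
    rwa [hw l hkC] at hl
  exact hne ((unique w₁ h₁ a₁).trans (unique w₂ h₂ a₂).symm)

theorem hammingDist_update_lt {z x : Π i, Fin (n i)} {k : Fin t} (h : z k ≠ x k) :
    hammingDist (update z k (x k)) x < hammingDist z x := by
  refine Finset.card_lt_card (Finset.ssubset_iff_of_subset (fun l hl => ?_) |>.mpr ⟨k, ?_, ?_⟩)
  · rcases eq_or_ne l k with rfl | hlk
    · simp at hl
    · simpa [hlk] using hl
  · simpa using h
  · simp

section Closed

variable {S : Set (Π i, Fin (n i))} (hS : activationClosed (hammingGraph n) (fun _ => 2) S)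
include hS

theorem activationClosed.update_mem_of_update_mem {u : Π i, Fin (n i)} {k : Fin t}
    {a : Fin (n k)} (hu : u ∈ S) (hua : update u k a ∈ S) (ha : a ≠ u k) (b : Fin (n k)) :
    update u k b ∈ S := by
  rcases eq_or_ne b (u k) with rfl | hb
  · simpa using hu
  rcases eq_or_ne b a with rfl | hba
  · exact hua
  have hne : u ≠ update u k a := fun h => ha (by simpa using (congrFun h k).symm)
  refine activationClosed_two_iff.mp hS hu hua hne (hammingGraph_adj_update hb).symm ?_
  have := hammingGraph_adj_update (u := update u k b)
    (show a ≠ update u k b k by simpa using hba.symm)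
  rwa [update_idem] at this

theorem activationClosed.subcube_subset_of_forall_update_mem {x : Π i, Fin (n i)}
    {C : Set (Fin t)} (hx : x ∈ S) (h : ∀ k ∉ C, ∀ a, update x k a ∈ S) :
    subcube x C ⊆ S := by
  intro z hz
  induction z using (measure (hammingDist · x)).wf.induction with | _ z ih
  have repair : ∀ k, z k ≠ x k → update z k (x k) ∈ S := fun k hk =>
    ih _ (hammingDist_update_lt hk) fun l hl => by
      rcases eq_or_ne l k with rfl | hlk <;> simp [*, hz l hl]
  by_cases two : ∃ k k', k ≠ k' ∧ z k ≠ x k ∧ z k' ≠ x k'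
  · obtain ⟨k, k', hkk', hk, hk'⟩ := two
    refine activationClosed_two_iff.mp hS (repair k hk) (repair k' hk') (fun h => hk ?_)
      (hammingGraph_adj_update hk.symm) (hammingGraph_adj_update hk'.symm)
    simpa [hkk'] using (congrFun h k).symm
  · push Not at two
    rcases eq_or_ne z x with rfl | hzx
    · exact hx
    obtain ⟨k, hk⟩ := Function.ne_iff.mp hzx
    have hkC : k ∉ C := fun hkC => hk (hz k hkC)
    convert h k hkC (z k) using 1
    funext l
    rcases eq_or_ne l k with rfl | hlk
    · simp
    · simp [hlk, two k l hlk.symm hk]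

theorem activationClosed.subcube_inter_subset {x : Π i, Fin (n i)} {A B : Set (Fin t)}
    (hA : subcube x A ⊆ S) (hB : subcube x B ⊆ S) : subcube x (A ∩ B) ⊆ S :=
  hS.subcube_subset_of_forall_update_mem (hA (self_mem_subcube x A)) fun k hk a => by
    by_cases hkA : k ∈ A
    · exact hB (update_mem_subcube x (fun hkB => hk ⟨hkA, hkB⟩) a)
    · exact hA (update_mem_subcube x hkA a)

theorem activationClosed.subcube_diff_singleton_subset {y : Π i, Fin (n i)} {B : Set (Fin t)}
    {k : Fin t} {c : Fin (n k)} (hB : subcube y B ⊆ S) (hc : update y k c ∈ S) (hck : c ≠ y k) :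
    subcube y (B \ {k}) ⊆ S :=
  hS.subcube_subset_of_forall_update_mem (hB (self_mem_subcube y B)) fun l hl a => by
    rcases eq_or_ne l k with rfl | hlk
    · exact hS.update_mem_of_update_mem (hB (self_mem_subcube y B)) hc hck a
    · exact hB (update_mem_subcube y (fun hlB => hl ⟨hlB, hlk⟩) a)

theorem activationClosed.update_mem_of_mem_of_mem {x y : Π i, Fin (n i)} {i j : Fin t}
    (hij : i ≠ j) (hi : x i ≠ y i) (hj : x j ≠ y j)
    (hagree : ∀ k, k ≠ i → k ≠ j → x k = y k) (hx : x ∈ S) (hy : y ∈ S) :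
    update x i (y i) ∈ S := by
  refine activationClosed_two_iff.mp hS hx hy (fun h => hi (congrFun h i))
    (hammingGraph_adj_update hi.symm).symm
    (hammingGraph_adj_of_ne_of_eq (k := j) ?_ fun l hl => ?_)
  · simpa [hij.symm] using hj
  · rcases eq_or_ne l i with rfl | hli
    · simp
    · simp [hli, hagree l hli hl]

theorem activationClosed.subcube_diff_pair_subset {x y : Π i, Fin (n i)} {A : Set (Fin t)}
    {i j : Fin t} (hij : i ≠ j) (hi : x i ≠ y i) (hj : x j ≠ y j)
    (hagree : ∀ k, k ≠ i → k ≠ j → x k = y k) (hA : subcube x A ⊆ S) (hy : y ∈ S) :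
    subcube x (A \ {i, j}) ⊆ S := by
  have hx : x ∈ S := hA (self_mem_subcube x A)
  have hmi := hS.update_mem_of_mem_of_mem hij hi hj hagree hx hy
  have hmj := hS.update_mem_of_mem_of_mem hij.symm hj hi (fun k hj hi => hagree k hi hj) hx hy
  have := hS.subcube_diff_singleton_subset (hS.subcube_diff_singleton_subset hA hmi hi.symm)
    hmj hj.symm
  rwa [Set.sdiff_sdiff, Set.union_singleton, Set.pair_comm] at this

end Closed

theorem closure_subcubes_dist_two_general {t : ℕ} (n : Fin t → ℕ)
    (x y : Π i, Fin (n i)) (i j : Fin t) (hij : i ≠ j)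
    (hi : x i ≠ y i) (hj : x j ≠ y j) (hagree : ∀ k, k ≠ i → k ≠ j → x k = y k)
    (A B : Set (Fin t)) :
    activationClosure (hammingGraph n) (fun _ => (2 : ℤ))
      (subcube x A ∪ subcube y B) = subcube x ((A ∩ B) \ {i, j}) := by
  have hxy (D : Set (Fin t)) : ∀ k ∈ D \ {i, j}, x k = y k := fun k hk =>
    hagree k (fun h => hk.2 (Or.inl h)) (fun h => hk.2 (Or.inr h))
  apply Set.Subset.antisymm
  · refine Set.sInter_subset_of_mem ⟨Set.union_subset ?_ ?_, activationClosed_subcube x _⟩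
    · exact subcube_mono x (Set.sdiff_subset.trans Set.inter_subset_left)
    · rw [subcube_congr (hxy _)]
      exact subcube_mono y (Set.sdiff_subset.trans Set.inter_subset_right)
  · refine Set.subset_sInter fun S ⟨hsub, hS⟩ => ?_
    have hx : x ∈ S := hsub (Or.inl (self_mem_subcube x A))
    have hy : y ∈ S := hsub (Or.inr (self_mem_subcube y B))
    have hA := hS.subcube_diff_pair_subset hij hi hj hagree (Set.subset_union_left.trans hsub) hy
    have hB := hS.subcube_diff_pair_subset hij hi.symm hj.symm
      (fun k hi hj => (hagree k hi hj).symm) (Set.subset_union_right.trans hsub) hx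
    rw [← subcube_congr (hxy B)] at hB
    exact (subcube_mono x inf_sdiff.ge).trans (hS.subcube_inter_subset hA hB)

theorem closure_subcubes_dist_two {t : ℕ} (n : Fin t → ℕ) (hn : ∀ i, 2 ≤ n i)
    (x y : Π i, Fin (n i)) (i j : Fin t) (hij : i ≠ j)
    (hdist : hammingDist x y = 2)
    (hi : x i ≠ y i) (hj : x j ≠ y j) (hagree : ∀ k, k ≠ i → k ≠ j → x k = y k)
    (A B : Set (Fin t)) :
    activationClosure (hammingGraph n) (fun _ => (2 : ℤ))
      (subcube x A ∪ subcube y B) = subcube x ((A ∩ B) \ {i, j}) :=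
  closure_subcubes_dist_two_general n x y i j hij hi hj hagree A B
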